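/- Let d(u,v,f) denote the length of the shortest u→v path avoiding failure f in a weighted digraph, and let k_i, k_{i+1} be two vertices on the canonical shortest path uv with f lying strictly between them. Let y be a vertex on the segment [k_i, k_{i+1}] maximizing d(u,v,y). Then d(u,v,f) = min{ d(u,k_{i+1},f) + d(k_{i+1},v), d(u,k_i) + d(k_i,v,f), d(u,v,y) }, where d(·,·) without a failure denotes ordinary shortest-path distance. -/

import Mathlib

variable {V : Type*} [DecidableEq V]

/-- `p` is a walk from `u` to `v` using edges of `E` (given as a list of vertices). -/
def IsWalk (E : Finset (V × V)) (u v : V) (p : List V) : Prop :=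
  p.head? = some u ∧ p.getLast? = some v ∧ p.Chain' (fun a b => (a, b) ∈ E)

/-- The edges of a path given as a list of vertices. -/
def pathEdges (p : List V) : List (V × V) := p.zip p.tail

/-- Total weight of a path. -/
def wt (w : V × V → ℕ) (p : List V) : ℕ := ((pathEdges p).map w).sum

/-- `p` is a shortest walk from `u` to `v` in the graph with edge set `E` and weights `w`. -/
def IsShortest (E : Finset (V × V)) (w : V × V → ℕ) (u v : V) (p : List V) : Prop :=
  IsWalk E u v p ∧ ∀ q, IsWalk E u v q → wt w p ≤ wt w q

/-- `e` is the bottleneck (`≺`-smallest) edge of the path `p`. -/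
def IsBottleneck [LinearOrder (V × V)] (p : List V) (e : V × V) : Prop :=
  e ∈ pathEdges p ∧ ∀ e' ∈ pathEdges p, e ≤ e'

/-- `e = w_{G'}(u,v)`: the `≺`-largest edge that is the bottleneck edge of some
shortest `u → v` path. -/
def IsMaxBottleneck [LinearOrder (V × V)] (E : Finset (V × V)) (w : V × V → ℕ)
    (u v : V) (e : V × V) : Prop :=
  (∃ p, IsShortest E w u v p ∧ IsBottleneck p e) ∧
  ∀ e', (∃ p, IsShortest E w u v p ∧ IsBottleneck p e') → e' ≤ e

/-- `ρ` is the canonical shortest-path function: `ρ u u` is the trivial path, and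
for `u ≠ v` (with `v` reachable from `u`), `ρ u v` is a shortest path obtained by
concatenating `ρ u u⋆`, the edge `w_{G'}(u,v) = (u⋆, v⋆)`, and `ρ v⋆ v`. -/
def IsCanonical [LinearOrder (V × V)] (E : Finset (V × V)) (w : V × V → ℕ)
    (ρ : V → V → List V) : Prop :=
  (∀ u, ρ u u = [u]) ∧
  (∀ u v, u ≠ v → (∃ p, IsWalk E u v p) →
    IsShortest E w u v (ρ u v) ∧
    ∃ e, IsMaxBottleneck E w u v e ∧ ρ u v = ρ u e.1 ++ ρ e.2 v)

/-- Shortest-path distance in the graph `(E, w)`, `⊤` if unreachable. -/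
noncomputable def gdist (E : Finset (V × V)) (w : V × V → ℕ) (u v : V) : ℕ∞ :=
  sInf {n : ℕ∞ | ∃ p, IsWalk E u v p ∧ (wt w p : ℕ∞) = n}

/-- Remove a failed vertex or edge from the edge set. -/
def removeF (E : Finset (V × V)) (f : V ⊕ (V × V)) : Finset (V × V) :=
  match f with
  | Sum.inl x => E.filter (fun e => e.1 ≠ x ∧ e.2 ≠ x)
  | Sum.inr e0 => E.erase e0

/-!
Positive weights make the shortest path `uv` simple, so the failure `f` occurs on it exactly
once, inside the segment `[kᵢ, kᵢ₊₁]`.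

Each term bounds `d(u,v,f)` from above: the prefix `u ⋯ kᵢ` and the suffix `kᵢ₊₁ ⋯ v` of `uv`
survive the failure, and `G − z ⊆ G − f` for an endpoint `z` of `f`, so
`d(u,v,f) ≤ d(u,v,z) ≤ d(u,v,y)` by the choice of `y`.

Conversely, an optimal replacement path either avoids `y`, and then lives in `G − y`, or passes
through `y`. In the latter case `f` lies on one side of `y` (or is `y` itself, when the third term
is `d(u,v,f)`): if the subpath `kᵢ ⋯ y` of `uv` survives, then
`d(u,kᵢ) + d(kᵢ,v,f) ≤ d(u,kᵢ) + d(kᵢ,y,f) + d(y,v,f) ≤ d(u,y) + d(y,v,f)`, which is at most the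
length of the replacement path; symmetrically for `y ⋯ kᵢ₊₁` and the first term.
-/

open List

section Walks

variable {α : Type*}

theorem mem_pathEdges_iff {l : List α} {e : α × α} :
    e ∈ pathEdges l ↔ ∃ l₁ l₂, l = l₁ ++ e.1 :: e.2 :: l₂ := by
  induction l with
  | nil => simp [pathEdges]
  | cons x t ih =>
    cases t with
    | nil =>
      refine iff_of_false (by simp [pathEdges]) ?_
      rintro ⟨l₁, l₂, h⟩
      have := congrArg length h
      simp at this; omega
    | cons y t =>
      rw [show pathEdges (x :: y :: t) = (x, y) :: pathEdges (y :: t) from rfl, mem_cons, ih]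
      constructor
      · rintro (rfl | ⟨l₁, l₂, h⟩)
        · exact ⟨[], t, rfl⟩
        · exact ⟨x :: l₁, l₂, by rw [h, cons_append]⟩
      · rintro ⟨_ | ⟨z, l₁⟩, l₂, h⟩
        · simp_all
        · simp only [cons_append, cons.injEq] at h
          exact .inr ⟨l₁, l₂, h.2⟩

theorem pathEdges_append_cons (a : List α) (m : α) (b : List α) :
    pathEdges (a ++ m :: b) = pathEdges (a ++ [m]) ++ pathEdges (m :: b) := by
  induction a with
  | nil => rfl
  | cons x t ih =>
    cases t with
    | nil => rfl
    | cons y t => simpa [pathEdges] using ih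

theorem pathEdges_nodup {l : List α} (h : l.Nodup) : (pathEdges l).Nodup := by
  have hsnd : (pathEdges l).map Prod.snd = l.tail := map_snd_zip (by simp)
  exact Nodup.of_map Prod.snd (hsnd ▸ h.sublist (tail_sublist l))

theorem wt_append_cons (w : α × α → ℕ) (a : List α) (m : α) (b : List α) :
    wt w (a ++ m :: b) = wt w (a ++ [m]) + wt w (m :: b) := by
  rw [wt, pathEdges_append_cons, map_append, sum_append, wt, wt]

theorem isChain_iff_forall_mem_pathEdges {R : α → α → Prop} {l : List α} :
    IsChain R l ↔ ∀ e ∈ pathEdges l, R e.1 e.2 := by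
  simp only [isChain_iff_forall_rel_of_append_cons_cons, mem_pathEdges_iff, Prod.forall]
  grind

theorem isWalk_iff_isChain {E : Finset (α × α)} {u v : α} {s : List α} :
    IsWalk E u v s ↔
      s.head? = some u ∧ s.getLast? = some v ∧ IsChain (fun a b => (a, b) ∈ E) s :=
  Iff.rfl

theorem isWalk_iff {E : Finset (α × α)} {u v : α} {s : List α} :
    IsWalk E u v s ↔
      s.head? = some u ∧ s.getLast? = some v ∧ ∀ e ∈ pathEdges s, e ∈ E := by
  rw [isWalk_iff_isChain, isChain_iff_forall_mem_pathEdges]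

variable {E F : Finset (α × α)} {w : α × α → ℕ} {u v m : α} {s : List α}

theorem isWalk_append_cons_iff {a b : List α} :
    IsWalk E u v (a ++ m :: b) ↔ IsWalk E u m (a ++ [m]) ∧ IsWalk E m v (m :: b) := by
  rw [isWalk_iff_isChain, isWalk_iff_isChain, isWalk_iff_isChain, isChain_split,
    getLast?_append_cons]
  have hhead : (a ++ m :: b).head? = (a ++ [m]).head? := by cases a <;> rfl
  rw [hhead, getLast?_concat]
  tauto

theorem isWalk_singleton (x : α) : IsWalk E x x [x] := ⟨rfl, rfl, .singleton x⟩

theorem IsWalk.mono (hEF : E ⊆ F) (h : IsWalk E u v s) : IsWalk F u v s :=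
  ⟨h.1, h.2.1, IsChain.imp (fun _ _ he => hEF he) h.2.2⟩

theorem IsWalk.eq_concat (h : IsWalk E u v s) : ∃ a, s = a ++ [v] :=
  getLast?_eq_some_iff.1 h.2.1

theorem IsWalk.eq_cons (h : IsWalk E u v s) : ∃ b, s = u :: b :=
  head?_eq_some_iff.1 h.1

theorem one_le_wt (hw : ∀ e ∈ E, 1 ≤ w e) {x y : α} {l : List α}
    (h : IsWalk E x y (x :: (l ++ [y]))) : 1 ≤ wt w (x :: (l ++ [y])) := by
  obtain ⟨z, t, hzt⟩ : ∃ z t, l ++ [y] = z :: t := by cases l <;> simp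
  rw [hzt] at h ⊢
  have hwt : wt w (x :: z :: t) = w (x, z) + wt w (z :: t) := rfl
  have := hw _ (isChain_cons_cons.1 h.2.2).1
  omega

end Walks

section Avoidance
variable {α : Type*} {E : Finset (α × α)} {u v m : α} {s : List α}

def Avoids (s : List α) : α ⊕ (α × α) → Prop
  | .inl x => x ∉ s
  | .inr e => e ∉ pathEdges s

theorem Avoids.of_isInfix {t : List α} {f : α ⊕ (α × α)} (hst : s <:+: t) (h : Avoids t f) :
    Avoids s f := by
  obtain ⟨a, c, rfl⟩ := hst
  cases f with
  | inl x => exact fun hx => h (by simp [hx])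
  | inr e =>
    intro he
    obtain ⟨l₁, l₂, rfl⟩ := mem_pathEdges_iff.1 he
    exact h (mem_pathEdges_iff.2 ⟨a ++ l₁, l₂ ++ c, by simp⟩)

theorem List.Nodup.avoids_or_avoids {a b : List α} (h : (a ++ m :: b).Nodup)
    (f : α ⊕ (α × α)) : Avoids (a ++ [m]) f ∨ Avoids (m :: b) f ∨ f = .inl m := by
  cases f with
  | inl x =>
    by_cases hxa : x ∈ a
    · exact .inr (.inl fun hxb => (nodup_append.1 h).2.2 x hxa x hxb rfl)
    by_cases hxm : x = m
    · exact .inr (.inr (hxm ▸ rfl))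
    · exact .inl (by simp [Avoids, hxa, hxm])
  | inr e =>
    have hnd := pathEdges_nodup h
    rw [pathEdges_append_cons] at hnd
    by_cases he : e ∈ pathEdges (a ++ [m])
    · exact .inr (.inl fun he' => (nodup_append.1 hnd).2.2 e he e he' rfl)
    · exact .inl he

theorem not_avoids_segment {ki ki₁ : α} {p₂ : List α} {f : α ⊕ (α × α)}
    (hnd : (ki :: (p₂ ++ [ki₁])).Nodup)
    (hf : match f with
      | Sum.inl x => x ∈ p₂
      | Sum.inr e₀ => e₀ ∈ pathEdges ([ki] ++ p₂ ++ [ki₁])) :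
    ¬ Avoids (ki :: (p₂ ++ [ki₁])) f ∧ f ≠ .inl ki ∧ f ≠ .inl ki₁ := by
  cases f with
  | inl x =>
    have hx : x ∈ p₂ := hf
    refine ⟨fun h => h (by simp [hx]), ?_, ?_⟩ <;> rintro ⟨⟩
    · exact (nodup_cons.1 hnd).1 (by simp [hx])
    · exact (nodup_append.1 (nodup_cons.1 hnd).2).2.2 _ hx _ (mem_singleton_self _) rfl
  | inr e => exact ⟨not_not.2 hf, Sum.inr_ne_inl, Sum.inr_ne_inl⟩

theorem avoids_prefix_and_suffix {ki ki₁ : α} {p₁ p₂ p₃ : List α} {f : α ⊕ (α × α)}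
    (hnd : (p₁ ++ ki :: (p₂ ++ ki₁ :: p₃)).Nodup) (hseg : ¬ Avoids (ki :: (p₂ ++ [ki₁])) f)
    (hki : f ≠ .inl ki) (hki₁ : f ≠ .inl ki₁) :
    Avoids (p₁ ++ [ki]) f ∧ Avoids (ki₁ :: p₃) f := by
  constructor
  · rcases hnd.avoids_or_avoids f with h | h | h
    · exact h
    · exact absurd (h.of_isInfix ⟨[], p₃, by simp⟩) hseg
    · exact absurd h hki
  · rw [show p₁ ++ ki :: (p₂ ++ ki₁ :: p₃) = (p₁ ++ ki :: p₂) ++ ki₁ :: p₃ by simp] at hnd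
    rcases hnd.avoids_or_avoids f with h | h | h
    · exact absurd (h.of_isInfix ⟨p₁, [], by simp⟩) hseg
    · exact h
    · exact absurd h hki₁

variable [DecidableEq α]

theorem removeF_subset (E : Finset (α × α)) (f : α ⊕ (α × α)) : removeF E f ⊆ E := by
  cases f with
  | inl x => exact Finset.filter_subset _ _
  | inr e => exact Finset.erase_subset _ _

theorem IsWalk.removeF {f : α ⊕ (α × α)} (h : IsWalk E u v s) (hf : Avoids s f) :
    IsWalk (removeF E f) u v s := by
  rw [isWalk_iff] at h ⊢
  refine ⟨h.1, h.2.1, fun e he => ?_⟩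
  cases f with
  | inl x =>
    obtain ⟨l₁, l₂, hs⟩ := mem_pathEdges_iff.1 he
    refine Finset.mem_filter.2 ⟨h.2.2 e he, ?_, ?_⟩ <;> rintro rfl <;> exact hf (by simp [hs])
  | inr e₀ => exact Finset.mem_erase.2 ⟨fun he₀ => hf (he₀ ▸ he), h.2.2 e he⟩

theorem exists_removeF_inl_subset_of_not_avoids {f : α ⊕ (α × α)} (hf : ¬ Avoids s f) :
    ∃ z ∈ s, removeF E (.inl z) ⊆ removeF E f := by
  cases f with
  | inl x => exact ⟨x, not_not.1 hf, subset_rfl⟩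
  | inr e =>
    obtain ⟨l₁, l₂, rfl⟩ := mem_pathEdges_iff.1 (not_not.1 hf)
    refine ⟨e.1, by simp, fun d hd => ?_⟩
    obtain ⟨hdE, hd₁, -⟩ := Finset.mem_filter.1 hd
    exact Finset.mem_erase.2 ⟨fun hde => hd₁ (hde ▸ rfl), hdE⟩

end Avoidance

section Distances
variable {α : Type*} {E F : Finset (α × α)} {w : α × α → ℕ} {u v m : α} {s : List α}

theorem gdist_le_wt (h : IsWalk E u v s) : gdist E w u v ≤ wt w s := sInf_le ⟨s, h, rfl⟩

theorem exists_isWalk_wt_eq_gdist (h : gdist E w u v ≠ ⊤) :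
    ∃ s, IsWalk E u v s ∧ (wt w s : ℕ∞) = gdist E w u v := by
  have hne : {n : ℕ∞ | ∃ s, IsWalk E u v s ∧ (wt w s : ℕ∞) = n}.Nonempty := by
    by_contra hemp
    exact h (by rw [gdist, Set.not_nonempty_iff_eq_empty.1 hemp, sInf_empty])
  exact csInf_mem hne

theorem gdist_le_of_subset (h : E ⊆ F) : gdist F w u v ≤ gdist E w u v :=
  le_sInf fun _ ⟨_, hs, hn⟩ => hn ▸ gdist_le_wt (hs.mono h)

theorem IsShortest.gdist_eq (h : IsShortest E w u v s) : gdist E w u v = wt w s :=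
  le_antisymm (gdist_le_wt h.1) (le_sInf fun _ ⟨q, hq, hn⟩ => hn ▸ Nat.cast_le.2 (h.2 q hq))

theorem gdist_add_gdist_le_wt {E₁ E₂ : Finset (α × α)} {a b : List α}
    (h₁ : IsWalk E₁ u m (a ++ [m])) (h₂ : IsWalk E₂ m v (m :: b)) :
    gdist E₁ w u m + gdist E₂ w m v ≤ wt w (a ++ m :: b) := by
  rw [wt_append_cons, Nat.cast_add]
  exact add_le_add (gdist_le_wt h₁) (gdist_le_wt h₂)

theorem gdist_triangle (E : Finset (α × α)) (w : α × α → ℕ) (u m v : α) :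
    gdist E w u v ≤ gdist E w u m + gdist E w m v := by
  rcases eq_or_ne (gdist E w u m) ⊤ with h₁ | h₁
  · simp [h₁]
  rcases eq_or_ne (gdist E w m v) ⊤ with h₂ | h₂
  · simp [h₂]
  obtain ⟨s, hs, hs_wt⟩ := exists_isWalk_wt_eq_gdist h₁
  obtain ⟨t, ht, ht_wt⟩ := exists_isWalk_wt_eq_gdist h₂
  obtain ⟨a, rfl⟩ := hs.eq_concat
  obtain ⟨b, rfl⟩ := ht.eq_cons
  calc gdist E w u v ≤ wt w (a ++ m :: b) := gdist_le_wt (isWalk_append_cons_iff.2 ⟨hs, ht⟩)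
    _ = _ := by rw [wt_append_cons, Nat.cast_add, hs_wt, ht_wt]

theorem min_gdist_le_gdist [DecidableEq α] (y : α) :
    min (gdist F w u y + gdist F w y v) (gdist (removeF F (.inl y)) w u v) ≤ gdist F w u v := by
  rcases eq_or_ne (gdist F w u v) ⊤ with h | h
  · simp [h]
  obtain ⟨q, hq, hq_wt⟩ := exists_isWalk_wt_eq_gdist h
  rw [← hq_wt]
  by_cases hy : y ∈ q
  · obtain ⟨a, b, rfl⟩ := append_of_mem hy
    obtain ⟨h₁, h₂⟩ := isWalk_append_cons_iff.1 hq
    exact min_le_of_left_le (gdist_add_gdist_le_wt h₁ h₂)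
  · exact min_le_of_right_le (gdist_le_wt (hq.removeF (f := .inl y) hy))

end Distances

section Shortest
variable {α : Type*} {E : Finset (α × α)} {w : α × α → ℕ} {u v m : α} {s : List α}

theorem IsShortest.prefix {a b : List α} (h : IsShortest E w u v (a ++ m :: b)) :
    IsShortest E w u m (a ++ [m]) := by
  obtain ⟨ha, hb⟩ := isWalk_append_cons_iff.1 h.1
  refine ⟨ha, fun q hq => ?_⟩
  obtain ⟨q, rfl⟩ := hq.eq_concat
  have := h.2 _ (isWalk_append_cons_iff.2 ⟨hq, hb⟩)
  rw [wt_append_cons w q, wt_append_cons w a m b] at this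
  omega

theorem IsShortest.suffix {a b : List α} (h : IsShortest E w u v (a ++ m :: b)) :
    IsShortest E w m v (m :: b) := by
  obtain ⟨ha, hb⟩ := isWalk_append_cons_iff.1 h.1
  refine ⟨hb, fun q hq => ?_⟩
  obtain ⟨q, rfl⟩ := hq.eq_cons
  have := h.2 _ (isWalk_append_cons_iff.2 ⟨ha, hq⟩)
  rw [wt_append_cons w a m q, wt_append_cons w a m b] at this
  omega

theorem IsShortest.nodup (hw : ∀ e ∈ E, 1 ≤ w e) (h : IsShortest E w u v s) : s.Nodup := by
  refine nodup_iff_sublist.2 fun x hx => ?_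
  obtain ⟨r₁, r₂, rfl, hx₁, hx₂⟩ := cons_sublist_iff.1 hx
  obtain ⟨a, c, rfl⟩ := append_of_mem hx₁
  obtain ⟨c', d, rfl⟩ := append_of_mem (singleton_sublist.1 hx₂)
  rw [show a ++ x :: c ++ (c' ++ x :: d) = a ++ x :: ((c ++ c') ++ x :: d) by simp] at h
  obtain ⟨hpre, hloop⟩ := isWalk_append_cons_iff.1 h.1
  obtain ⟨hcycle, hpost⟩ := (isWalk_append_cons_iff (a := x :: (c ++ c'))).1 hloop
  have hshort := h.2 _ (isWalk_append_cons_iff.2 ⟨hpre, hpost⟩)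
  have hcycle_wt : 1 ≤ wt w (x :: (c ++ c' ++ [x])) := one_le_wt hw hcycle
  rw [wt_append_cons w a x (c ++ c' ++ x :: d), wt_append_cons w a x d,
    show x :: (c ++ c' ++ x :: d) = x :: (c ++ c') ++ x :: d from rfl,
    wt_append_cons w (x :: (c ++ c'))] at hshort
  simp only [cons_append] at hshort
  omega

end Shortest

section Bypass
variable {α : Type*} {E F : Finset (α × α)} {w : α × α → ℕ} {u v m z : α}

theorem IsShortest.gdist_le_add_left {s : List α} (hs : IsShortest E w u m s)
    (hF : IsWalk F u m s) : gdist F w u v ≤ gdist E w u m + gdist F w m v := by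
  rw [hs.gdist_eq]
  exact (gdist_triangle F w u m v).trans (add_le_add_left (gdist_le_wt hF) _)

theorem IsShortest.gdist_le_add_right {s : List α} (hs : IsShortest E w m v s)
    (hF : IsWalk F m v s) : gdist F w u v ≤ gdist F w u m + gdist E w m v := by
  rw [hs.gdist_eq]
  exact (gdist_triangle F w u m v).trans (add_le_add_right (gdist_le_wt hF) _)

theorem IsShortest.gdist_add_gdist_le_left (hFE : F ⊆ E) {a c : List α}
    (hs : IsShortest E w u z (a ++ m :: c)) (hF : IsWalk F m z (m :: c)) :
    gdist E w u m + gdist F w m v ≤ gdist F w u z + gdist F w z v :=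
  calc gdist E w u m + gdist F w m v
      ≤ gdist E w u m + gdist F w m z + gdist F w z v := by
        rw [add_assoc]; gcongr; exact gdist_triangle F w m z v
    _ ≤ gdist E w u z + gdist F w z v := by
        rw [hs.gdist_eq]
        gcongr
        exact gdist_add_gdist_le_wt (isWalk_append_cons_iff.1 hs.1).1 hF
    _ ≤ gdist F w u z + gdist F w z v := by gcongr; exact gdist_le_of_subset hFE

theorem IsShortest.gdist_add_gdist_le_right (hFE : F ⊆ E) {c b : List α}
    (hs : IsShortest E w z v (c ++ m :: b)) (hF : IsWalk F z m (c ++ [m])) :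
    gdist F w u m + gdist E w m v ≤ gdist F w u z + gdist F w z v :=
  calc gdist F w u m + gdist E w m v
      ≤ gdist F w u z + (gdist F w z m + gdist E w m v) := by
        rw [← add_assoc]; gcongr; exact gdist_triangle F w u z m
    _ ≤ gdist F w u z + gdist E w z v := by
        rw [hs.gdist_eq]
        gcongr
        exact gdist_add_gdist_le_wt hF (isWalk_append_cons_iff.1 hs.1).2
    _ ≤ gdist F w u z + gdist F w z v := by gcongr; exact gdist_le_of_subset hFE

end Bypass

section Replacement
variable {α : Type*} [DecidableEq α] {E : Finset (α × α)} {w : α × α → ℕ}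
  {u v ki ki₁ y : α} {p₁ p₂ p₃ : List α}

theorem min_le_gdist_removeF (hs : IsShortest E w u v (p₁ ++ ki :: (p₂ ++ ki₁ :: p₃)))
    (hnd : (p₁ ++ ki :: (p₂ ++ ki₁ :: p₃)).Nodup) (f : α ⊕ (α × α))
    (hy : y ∈ ki :: (p₂ ++ [ki₁])) :
    min (min (gdist (removeF E f) w u ki₁ + gdist E w ki₁ v)
          (gdist E w u ki + gdist (removeF E f) w ki v))
        (gdist (removeF E (.inl y)) w u v) ≤ gdist (removeF E f) w u v := by
  set F := removeF E f
  have hFE : F ⊆ E := removeF_subset E f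
  suffices h : min (gdist F w u ki₁ + gdist E w ki₁ v) (gdist E w u ki + gdist F w ki v)
      ≤ gdist F w u y + gdist F w y v ∨ gdist (removeF E (.inl y)) w u v ≤ gdist F w u v by
    refine h.elim (fun h => (min_le_min h ?_).trans (min_gdist_le_gdist y)) min_le_of_right_le
    exact gdist_le_of_subset (Finset.filter_subset_filter _ hFE)
  rcases mem_cons.1 hy with rfl | hy
  · exact .inl (min_le_of_right_le (hs.prefix.gdist_add_gdist_le_left hFE (isWalk_singleton _)))
  rcases mem_append.1 hy with hy | hy
  · obtain ⟨C, D, rfl⟩ := append_of_mem hy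
    rw [show p₁ ++ ki :: (C ++ y :: D ++ ki₁ :: p₃)
        = (p₁ ++ ki :: C) ++ y :: (D ++ ki₁ :: p₃) by simp] at hs hnd
    rcases hnd.avoids_or_avoids f with hL | hR | rfl
    · have hpre := hs.prefix
      rw [show p₁ ++ ki :: C ++ [y] = p₁ ++ ki :: (C ++ [y]) by simp] at hpre hL
      exact .inl (min_le_of_right_le
        (hpre.gdist_add_gdist_le_left hFE (isWalk_append_cons_iff.1 (hpre.1.removeF hL)).2))
    · have hsuf := hs.suffix
      rw [show y :: (D ++ ki₁ :: p₃) = (y :: D) ++ ki₁ :: p₃ by simp] at hsuf hR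
      exact .inl (min_le_of_left_le
        (hsuf.gdist_add_gdist_le_right hFE (isWalk_append_cons_iff.1 (hsuf.1.removeF hR)).1))
    · exact .inr le_rfl
  · rw [mem_singleton] at hy
    subst hy
    rw [show p₁ ++ ki :: (p₂ ++ y :: p₃) = (p₁ ++ ki :: p₂) ++ y :: p₃ by simp] at hs
    exact .inl (min_le_of_left_le
      (hs.suffix.gdist_add_gdist_le_right (c := []) hFE (isWalk_singleton _)))


end Replacement

theorem stmt11_general (E : Finset (V × V)) (w : V × V → ℕ) (hw : ∀ e ∈ E, 1 ≤ w e)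
    (u v ki ki1 : V) (p1 p2 p3 : List V) (p : List V)
    (hp : p = p1 ++ [ki] ++ p2 ++ [ki1] ++ p3)
    (hshort : IsShortest E w u v p)
    (f : V ⊕ (V × V))
    (hf : match f with
      | Sum.inl x => x ∈ p2
      | Sum.inr e0 => e0 ∈ pathEdges ([ki] ++ p2 ++ [ki1]))
    (y : V) (hy : y ∈ [ki] ++ p2 ++ [ki1])
    (hymax : ∀ z ∈ [ki] ++ p2 ++ [ki1],
      gdist (removeF E (Sum.inl z)) w u v ≤ gdist (removeF E (Sum.inl y)) w u v) :
    gdist (removeF E f) w u v =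
      min (min (gdist (removeF E f) w u ki1 + gdist E w ki1 v)
               (gdist E w u ki + gdist (removeF E f) w ki v))
          (gdist (removeF E (Sum.inl y)) w u v) := by
  have hs : IsShortest E w u v (p1 ++ ki :: (p2 ++ ki1 :: p3)) := by simpa [hp] using hshort
  have hnd := hs.nodup hw
  have hnd_seg : (ki :: (p2 ++ [ki1])).Nodup := hnd.sublist (IsInfix.sublist ⟨p1, p3, by simp⟩)
  obtain ⟨hseg, hki, hki1⟩ := not_avoids_segment hnd_seg hf
  obtain ⟨hpre, hsuf⟩ := avoids_prefix_and_suffix hnd hseg hki hki1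
  obtain ⟨z, hz, hzf⟩ := exists_removeF_inl_subset_of_not_avoids (E := E) hseg
  have hs₁ : IsShortest E w u v ((p1 ++ ki :: p2) ++ ki1 :: p3) := by simpa using hs
  refine le_antisymm (le_min (le_min ?_ ?_) ?_) (min_le_gdist_removeF hs hnd f (by simpa using hy))
  · exact hs₁.suffix.gdist_le_add_right (hs₁.suffix.1.removeF hsuf)
  · exact hs.prefix.gdist_le_add_left (hs.prefix.1.removeF hpre)
  · exact (gdist_le_of_subset hzf).trans (hymax z (by simpa using hz))

theorem stmt11 (E : Finset (V × V)) (w : V × V → ℕ) (hw : ∀ e ∈ E, 1 ≤ w e)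
    (u v ki ki1 : V) (p1 p2 p3 : List V) (p : List V)
    (hp : p = p1 ++ [ki] ++ p2 ++ [ki1] ++ p3)
    (hshort : IsShortest E w u v p)
    (hcons : ∀ a m b : List V, p = a ++ m ++ b → ∀ x y : V,
      m.head? = some x → m.getLast? = some y → IsShortest E w x y m)
    (f : V ⊕ (V × V))
    (hf : match f with
      | Sum.inl x => x ∈ p2
      | Sum.inr e0 => e0 ∈ pathEdges ([ki] ++ p2 ++ [ki1]))
    (y : V) (hy : y ∈ [ki] ++ p2 ++ [ki1])
    (hymax : ∀ z ∈ [ki] ++ p2 ++ [ki1],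
      gdist (removeF E (Sum.inl z)) w u v ≤ gdist (removeF E (Sum.inl y)) w u v) :
    gdist (removeF E f) w u v =
      min (min (gdist (removeF E f) w u ki1 + gdist E w ki1 v)
               (gdist E w u ki + gdist (removeF E f) w ki v))
          (gdist (removeF E (Sum.inl y)) w u v) :=
  stmt11_general E w hw u v ki ki1 p1 p2 p3 p hp hshort f hf y hy hymax
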